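/- Monotonicity of the greedy (POD) rank-one terms: let b ∈ H and define a greedy sequence by f₀ = 0 and f_{n+1} = f_n + r_{n+1}⊗s_{n+1}, where (r_{n+1}, s_{n+1}) is a best rank-one approximation of b − f_n. Then the sequence of norms of the extracted rank-one terms is non-increasing: ‖r_{n+1}⊗s_{n+1}‖_F ≤ ‖r_n⊗s_n‖_F for all n ≥ 1. -/

import Mathlib

open Matrix Filter Topology

noncomputable section

/-- The Frobenius inner product `⟨A,B⟩_F = trace(Aᵀ B)` on real `p × q` matrices. -/
def frobInner {p q : ℕ} (A B : Matrix (Fin p) (Fin q) ℝ) : ℝ := (Aᵀ * B).trace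

/-- The Frobenius norm. -/
def frobNorm {p q : ℕ} (A : Matrix (Fin p) (Fin q) ℝ) : ℝ := Real.sqrt (frobInner A A)

/-- The rank-one matrix `r ⊗ s` with entries `(r ⊗ s)_{ij} = r i * s j`. -/
def tensor {p q : ℕ} (r : EuclideanSpace ℝ (Fin p)) (s : EuclideanSpace ℝ (Fin q)) :
    Matrix (Fin p) (Fin q) ℝ := Matrix.of fun i j => r i * s j

/-! Let `t = r ⊗ s` be a best rank-one approximation of `R`. Optimality along lines through `t`
makes the residual `R - t` orthogonal to every `u ⊗ s` and `r ⊗ v`, and bounds `⟨R, u ⊗ v⟩` by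
`‖t‖ ‖u‖ ‖v‖`. Splitting `u = u' + c r` with `u' ⟂ r` kills both `⟨R - t, r ⊗ v⟩` and
`⟨t, u' ⊗ v⟩`, so `⟨R - t, u ⊗ v⟩ ≤ ‖t‖ ‖u‖ ‖v‖`. The next greedy term `t'` satisfies
`‖t'‖² = ⟨R - t, t'⟩` by the same orthogonality, whence `‖t'‖ ≤ ‖t‖`. -/

open scoped InnerProductSpace

section LineSearch

variable {E : Type*} [NormedAddCommGroup E] [InnerProductSpace ℝ E]

/- Both lemmas compare `x - t` with the points of a line: the squared distance to the line is a
quadratic polynomial in the parameter that is bounded below, so its discriminant is `≤ 0`. -/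

theorem inner_sub_eq_zero_of_forall_norm_sub_le {x t w : E}
    (h : ∀ a : ℝ, ‖x - t‖ ≤ ‖x - (t + a • w)‖) : ⟪x - t, w⟫_ℝ = 0 := by
  have hquad : ∀ a : ℝ, 0 ≤ ‖w‖ ^ 2 * (a * a) + (-2 * ⟪x - t, w⟫_ℝ) * a + 0 := by
    intro a
    have h2 := pow_le_pow_left₀ (norm_nonneg _) (h a) 2
    rw [← sub_sub, norm_sub_sq_real (x - t), inner_smul_right, norm_smul, Real.norm_eq_abs,
      mul_pow, sq_abs] at h2
    linarith
  have hdiscrim := discrim_le_zero hquad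
  rw [discrim] at hdiscrim
  nlinarith [sq_nonneg ⟪x - t, w⟫_ℝ]

theorem abs_inner_le_of_forall_norm_sub_le {x t w : E} (ht : ⟪x - t, t⟫_ℝ = 0)
    (h : ∀ a : ℝ, ‖x - t‖ ≤ ‖x - a • w‖) : |⟪x, w⟫_ℝ| ≤ ‖t‖ * ‖w‖ := by
  have hpyth : ‖x‖ ^ 2 = ‖x - t‖ ^ 2 + ‖t‖ ^ 2 := by
    simpa [ht] using norm_add_sq_real (x - t) t
  have hquad : ∀ a : ℝ, 0 ≤ ‖w‖ ^ 2 * (a * a) + (-2 * ⟪x, w⟫_ℝ) * a + ‖t‖ ^ 2 := by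
    intro a
    have h2 := pow_le_pow_left₀ (norm_nonneg _) (h a) 2
    rw [norm_sub_sq_real x (a • w), inner_smul_right, norm_smul, Real.norm_eq_abs, mul_pow,
      sq_abs] at h2
    linarith
  have hdiscrim := discrim_le_zero hquad
  rw [discrim] at hdiscrim
  exact abs_le_of_sq_le_sq (by nlinarith) (by positivity)

theorem exists_eq_add_smul_of_inner_eq_zero (r u : E) :
    ∃ (c : ℝ) (u' : E), u = u' + c • r ∧ ⟪r, u'⟫_ℝ = 0 ∧ ‖u'‖ ≤ ‖u‖ := by
  set K := ℝ ∙ r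
  obtain ⟨c, hc⟩ := Submodule.mem_span_singleton.mp (K.starProjection_apply_mem u)
  refine ⟨c, u - K.starProjection u, by rw [hc, sub_add_cancel], ?_, ?_⟩
  · exact Submodule.mem_orthogonal_singleton_iff_inner_right.mp
      (K.sub_starProjection_mem_orthogonal u)
  · rw [← K.starProjection_orthogonal_val]
    exact Kᗮ.norm_starProjection_apply_le u

end LineSearch

section Frobenius

variable {p q : ℕ}

def frobVec (A : Matrix (Fin p) (Fin q) ℝ) : EuclideanSpace ℝ (Fin q × Fin p) :=
  WithLp.toLp 2 A.vec

theorem frobVec_sub (A B : Matrix (Fin p) (Fin q) ℝ) : frobVec (A - B) = frobVec A - frobVec B :=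
  rfl

theorem frobVec_add (A B : Matrix (Fin p) (Fin q) ℝ) : frobVec (A + B) = frobVec A + frobVec B :=
  rfl

theorem frobVec_smul (a : ℝ) (A : Matrix (Fin p) (Fin q) ℝ) : frobVec (a • A) = a • frobVec A :=
  rfl

theorem frobInner_eq_inner (A B : Matrix (Fin p) (Fin q) ℝ) :
    frobInner A B = ⟪frobVec A, frobVec B⟫_ℝ := by
  rw [frobInner, ← vec_dotProduct_vec, frobVec, frobVec, EuclideanSpace.inner_toLp_toLp]
  simp [dotProduct_comm]

theorem frobNorm_eq_norm (A : Matrix (Fin p) (Fin q) ℝ) : frobNorm A = ‖frobVec A‖ := by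
  rw [frobNorm, frobInner_eq_inner, real_inner_self_eq_norm_sq, Real.sqrt_sq (norm_nonneg _)]

theorem tensor_add_left (u u' : EuclideanSpace ℝ (Fin p)) (v : EuclideanSpace ℝ (Fin q)) :
    tensor (u + u') v = tensor u v + tensor u' v := by
  ext i j; simp [tensor, add_mul]

theorem tensor_add_right (u : EuclideanSpace ℝ (Fin p)) (v v' : EuclideanSpace ℝ (Fin q)) :
    tensor u (v + v') = tensor u v + tensor u v' := by
  ext i j; simp [tensor, mul_add]

theorem tensor_smul_left (a : ℝ) (u : EuclideanSpace ℝ (Fin p)) (v : EuclideanSpace ℝ (Fin q)) :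
    tensor (a • u) v = a • tensor u v := by
  ext i j; simp [tensor, mul_assoc]

theorem tensor_smul_right (a : ℝ) (u : EuclideanSpace ℝ (Fin p)) (v : EuclideanSpace ℝ (Fin q)) :
    tensor u (a • v) = a • tensor u v := by
  ext i j; simp [tensor, mul_left_comm]

theorem inner_frobVec_tensor (u u' : EuclideanSpace ℝ (Fin p)) (v v' : EuclideanSpace ℝ (Fin q)) :
    ⟪frobVec (tensor u v), frobVec (tensor u' v')⟫_ℝ = ⟪u, u'⟫_ℝ * ⟪v, v'⟫_ℝ := by
  rw [frobVec, frobVec, EuclideanSpace.inner_toLp_toLp]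
  simp only [dotProduct, vec, tensor, of_apply, Fintype.sum_prod_type,
    PiLp.inner_apply, Finset.sum_mul_sum, star_trivial, RCLike.inner_apply, conj_trivial]
  rw [Finset.sum_comm]
  exact Finset.sum_congr rfl fun _ _ => Finset.sum_congr rfl fun _ _ => by ring

theorem norm_frobVec_tensor (u : EuclideanSpace ℝ (Fin p)) (v : EuclideanSpace ℝ (Fin q)) :
    ‖frobVec (tensor u v)‖ = ‖u‖ * ‖v‖ := by
  rw [← sq_eq_sq₀ (norm_nonneg _) (by positivity), ← real_inner_self_eq_norm_sq,
    inner_frobVec_tensor, real_inner_self_eq_norm_sq, real_inner_self_eq_norm_sq, mul_pow]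

end Frobenius

section BestRankOne

variable {p q : ℕ}

def IsBestRankOneApprox (R : Matrix (Fin p) (Fin q) ℝ) (r : EuclideanSpace ℝ (Fin p))
    (s : EuclideanSpace ℝ (Fin q)) : Prop :=
  ∀ u v, frobNorm (R - tensor r s) ≤ frobNorm (R - tensor u v)

namespace IsBestRankOneApprox

variable {R : Matrix (Fin p) (Fin q) ℝ} {r : EuclideanSpace ℝ (Fin p)}
  {s : EuclideanSpace ℝ (Fin q)}

theorem norm_sub_le (h : IsBestRankOneApprox R r s) (u : EuclideanSpace ℝ (Fin p))
    (v : EuclideanSpace ℝ (Fin q)) :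
    ‖frobVec R - frobVec (tensor r s)‖ ≤ ‖frobVec R - frobVec (tensor u v)‖ := by
  simpa only [frobNorm_eq_norm, frobVec_sub] using h u v

theorem inner_residual_tensor_left (h : IsBestRankOneApprox R r s)
    (u : EuclideanSpace ℝ (Fin p)) :
    ⟪frobVec (R - tensor r s), frobVec (tensor u s)⟫_ℝ = 0 := by
  rw [frobVec_sub]
  refine inner_sub_eq_zero_of_forall_norm_sub_le fun a => ?_
  simpa only [tensor_add_left, tensor_smul_left, frobVec_add, frobVec_smul]
    using h.norm_sub_le (r + a • u) s

theorem inner_residual_tensor_right (h : IsBestRankOneApprox R r s)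
    (v : EuclideanSpace ℝ (Fin q)) :
    ⟪frobVec (R - tensor r s), frobVec (tensor r v)⟫_ℝ = 0 := by
  rw [frobVec_sub]
  refine inner_sub_eq_zero_of_forall_norm_sub_le fun a => ?_
  simpa only [tensor_add_right, tensor_smul_right, frobVec_add, frobVec_smul]
    using h.norm_sub_le r (s + a • v)

theorem abs_inner_tensor_le (h : IsBestRankOneApprox R r s) (u : EuclideanSpace ℝ (Fin p))
    (v : EuclideanSpace ℝ (Fin q)) :
    |⟪frobVec R, frobVec (tensor u v)⟫_ℝ| ≤ ‖frobVec (tensor r s)‖ * (‖u‖ * ‖v‖) := by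
  rw [← norm_frobVec_tensor]
  refine abs_inner_le_of_forall_norm_sub_le (h.inner_residual_tensor_left r) fun a => ?_
  simpa only [tensor_smul_left, frobVec_smul] using h.norm_sub_le (a • u) v

theorem inner_residual_tensor_le (h : IsBestRankOneApprox R r s) (u : EuclideanSpace ℝ (Fin p))
    (v : EuclideanSpace ℝ (Fin q)) :
    ⟪frobVec (R - tensor r s), frobVec (tensor u v)⟫_ℝ ≤ ‖frobVec (tensor r s)‖ * (‖u‖ * ‖v‖) := by
  obtain ⟨c, u', rfl, hu'r, hu'⟩ := exists_eq_add_smul_of_inner_eq_zero r u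
  have hsplit : ⟪frobVec (R - tensor r s), frobVec (tensor (u' + c • r) v)⟫_ℝ
      = ⟪frobVec R, frobVec (tensor u' v)⟫_ℝ := by
    rw [tensor_add_left, tensor_smul_left, frobVec_add, frobVec_smul, inner_add_right,
      inner_smul_right, h.inner_residual_tensor_right, frobVec_sub, inner_sub_left,
      inner_frobVec_tensor, hu'r]
    ring
  calc ⟪frobVec (R - tensor r s), frobVec (tensor (u' + c • r) v)⟫_ℝ
      ≤ |⟪frobVec R, frobVec (tensor u' v)⟫_ℝ| := hsplit ▸ le_abs_self _
    _ ≤ ‖frobVec (tensor r s)‖ * (‖u'‖ * ‖v‖) := h.abs_inner_tensor_le u' v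
    _ ≤ ‖frobVec (tensor r s)‖ * (‖u' + c • r‖ * ‖v‖) := by gcongr

theorem frobNorm_tensor_le_of_residual {r' : EuclideanSpace ℝ (Fin p)}
    {s' : EuclideanSpace ℝ (Fin q)} (h : IsBestRankOneApprox R r s)
    (h' : IsBestRankOneApprox (R - tensor r s) r' s') :
    frobNorm (tensor r' s') ≤ frobNorm (tensor r s) := by
  rw [frobNorm_eq_norm, frobNorm_eq_norm]
  have hsq : ‖frobVec (tensor r' s')‖ ^ 2 ≤ ‖frobVec (tensor r s)‖ * ‖frobVec (tensor r' s')‖ := by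
    calc ‖frobVec (tensor r' s')‖ ^ 2
        = ⟪frobVec (R - tensor r s), frobVec (tensor r' s')⟫_ℝ := by
          have := h'.inner_residual_tensor_left r'
          rw [frobVec_sub, inner_sub_left, real_inner_self_eq_norm_sq] at this
          linarith
      _ ≤ ‖frobVec (tensor r s)‖ * (‖r'‖ * ‖s'‖) := h.inner_residual_tensor_le r' s'
      _ = ‖frobVec (tensor r s)‖ * ‖frobVec (tensor r' s')‖ := by rw [norm_frobVec_tensor r' s']
  nlinarith [norm_nonneg (frobVec (tensor r' s')), norm_nonneg (frobVec (tensor r s))]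

end IsBestRankOneApprox

end BestRankOne

theorem stmt_16_general {p q : ℕ}
    (b : Matrix (Fin p) (Fin q) ℝ)
    (f : ℕ → Matrix (Fin p) (Fin q) ℝ)
    (r : ℕ → EuclideanSpace ℝ (Fin p)) (s : ℕ → EuclideanSpace ℝ (Fin q))
    (hstep : ∀ n, f (n + 1) = f n + tensor (r n) (s n))
    (hbest : ∀ (n : ℕ) (u : EuclideanSpace ℝ (Fin p)) (v : EuclideanSpace ℝ (Fin q)),
      frobNorm ((b - f n) - tensor (r n) (s n)) ≤ frobNorm ((b - f n) - tensor u v)) :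
    ∀ n : ℕ, frobNorm (tensor (r (n + 1)) (s (n + 1))) ≤ frobNorm (tensor (r n) (s n)) := by
  intro n
  have hnext : IsBestRankOneApprox ((b - f n) - tensor (r n) (s n)) (r (n + 1)) (s (n + 1)) := by
    rw [← sub_add_eq_sub_sub, ← hstep]
    exact hbest (n + 1)
  exact IsBestRankOneApprox.frobNorm_tensor_le_of_residual (hbest n) hnext

/-- Monotonicity of the greedy (POD) rank-one terms: the norms of the successively
extracted rank-one terms are non-increasing. -/
theorem stmt_16 {p q : ℕ} (hp : 1 ≤ p) (hq : 1 ≤ q)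
    (b : Matrix (Fin p) (Fin q) ℝ)
    (f : ℕ → Matrix (Fin p) (Fin q) ℝ)
    (r : ℕ → EuclideanSpace ℝ (Fin p)) (s : ℕ → EuclideanSpace ℝ (Fin q))
    (hf0 : f 0 = 0)
    (hstep : ∀ n, f (n + 1) = f n + tensor (r n) (s n))
    (hbest : ∀ (n : ℕ) (u : EuclideanSpace ℝ (Fin p)) (v : EuclideanSpace ℝ (Fin q)),
      frobNorm ((b - f n) - tensor (r n) (s n)) ≤ frobNorm ((b - f n) - tensor u v)) :
    ∀ n : ℕ, frobNorm (tensor (r (n + 1)) (s (n + 1))) ≤ frobNorm (tensor (r n) (s n)) :=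
  stmt_16_general b f r s hstep hbest

end
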